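/- arXiv:0806.1694 — 8 statements merged into one kernel-verified Lean document; each statement's English description precedes it below -/
import Mathlib

section
/- If f : ℕ → {-1, 1} is a completely multiplicative function with f(p) = -1 for at least one prime p, then the real number φ = Σ_{n=1}^∞ ((1 + f(n))/2) · 2^(-n) is irrational. -/
/-!
If `φ` were rational, its binary digits `(1 + f (n + 1)) / 2` would be eventually periodic:
either they are eventually all `1`, or every tail `0.dₘdₘ₊₁…` of the expansion is `< 1` and
hence equals `fract (2 ^ m φ)`, and the numbers `fract (2 ^ m φ)` of a rational `φ` repeat.
So `f` would be eventually periodic, say with period `T`. Then `f ((n + 1) T) = f (n T)` and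
cancelling `f T` make `f` eventually constant, which `f (p ^ (k + 1)) = -f (p ^ k)` rules out.
-/

def EventuallyPeriodic {α : Type*} (u : ℕ → α) : Prop :=
  ∃ N T, 0 < T ∧ ∀ n ≥ N, u (n + T) = u n

theorem EventuallyPeriodic.comp {α β : Type*} {u : ℕ → α} (h : EventuallyPeriodic u) (g : α → β) :
    EventuallyPeriodic (g ∘ u) := by
  obtain ⟨N, T, hT, hu⟩ := h
  exact ⟨N, T, hT, fun n hn => congrArg g (hu n hn)⟩

theorem EventuallyPeriodic.of_comp_add_one {α : Type*} {u : ℕ → α}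
    (h : EventuallyPeriodic fun n => u (n + 1)) : EventuallyPeriodic u := by
  obtain ⟨N, T, hT, hu⟩ := h
  refine ⟨N + 1, T, hT, fun n hn => ?_⟩
  obtain ⟨k, rfl⟩ := Nat.exists_eq_add_of_le' (Nat.one_le_of_lt hn)
  simpa [Nat.add_right_comm k] using hu k (by omega)

theorem eventually_const_of_eventuallyPeriodic_of_mul {f : ℕ → ℤ}
    (hfmul : ∀ m n : ℕ, 1 ≤ m → 1 ≤ n → f (m * n) = f m * f n)
    (hf0 : ∀ n, 1 ≤ n → f n ≠ 0) (h : EventuallyPeriodic f) :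
    ∃ N, ∀ n ≥ N, f n = f N := by
  obtain ⟨N, T, hT, hf⟩ := h
  have hstep : ∀ n ≥ N + 1, f (n + 1) = f n := by
    intro n hn
    have hnT : f ((n + 1) * T) = f (n * T) := by
      rw [add_one_mul]
      exact hf _ (le_trans (by omega) (Nat.le_mul_of_pos_right n hT))
    rw [hfmul _ _ (by omega) hT, hfmul _ _ (by omega) hT] at hnT
    exact mul_right_cancel₀ (hf0 T hT) hnT
  refine ⟨N + 1, fun n hn => ?_⟩
  induction n, hn using Nat.le_induction with
  | base => rfl
  | succ n hn ih => rw [hstep n hn, ih]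

theorem not_eventually_const_of_mul {f : ℕ → ℤ}
    (hfmul : ∀ m n : ℕ, 1 ≤ m → 1 ≤ n → f (m * n) = f m * f n)
    (hf0 : ∀ n, 1 ≤ n → f n ≠ 0) {p : ℕ} (hp : 1 < p) (hfp : f p ≠ 1) :
    ¬ ∃ N, ∀ n ≥ N, f n = f N := by
  rintro ⟨N, hN⟩
  have hpN : N ≤ p ^ N := (Nat.lt_pow_self hp).le
  have hpos : 1 ≤ p ^ N := Nat.one_le_pow _ _ (by omega)
  have h : f (p ^ N) * f p = f (p ^ N) * 1 := by
    rw [← hfmul _ _ hpos (by omega), ← pow_succ, mul_one, hN _ hpN,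
      hN _ (hpN.trans (Nat.pow_le_pow_right (by omega) N.le_succ))]
  exact hfp (mul_left_cancel₀ (hf0 _ hpos) h)

theorem not_eventuallyPeriodic_of_mul {f : ℕ → ℤ}
    (hfmul : ∀ m n : ℕ, 1 ≤ m → 1 ≤ n → f (m * n) = f m * f n)
    (hf0 : ∀ n, 1 ≤ n → f n ≠ 0) {p : ℕ} (hp : 1 < p) (hfp : f p ≠ 1) :
    ¬ EventuallyPeriodic f := fun h =>
  not_eventually_const_of_mul hfmul hf0 hp hfp
    (eventually_const_of_eventuallyPeriodic_of_mul hfmul hf0 h)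

theorem eventuallyPeriodic_fract_pow_mul_ratCast (b : ℕ) (q : ℚ) :
    EventuallyPeriodic fun n => Int.fract ((b : ℝ) ^ n * q) := by
  have : NeZero q.den := ⟨q.den_nz⟩
  obtain ⟨i, j, hij, h⟩ := Set.finite_univ.exists_lt_map_eq_of_forall_mem
    (f := fun n : ℕ => (((b ^ n * q.num : ℤ)) : ZMod q.den)) (fun _ => Set.mem_univ _)
  obtain ⟨c, hc⟩ := (ZMod.intCast_eq_intCast_iff_dvd_sub _ _ _).1 h
  obtain ⟨T, rfl⟩ := Nat.exists_eq_add_of_lt hij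
  refine ⟨i, T + 1, T.succ_pos, fun n hn => Int.fract_eq_fract.2 ⟨b ^ (n - i) * c, ?_⟩⟩
  obtain ⟨k, rfl⟩ := Nat.exists_eq_add_of_le hn
  have hc' : (b : ℝ) ^ (i + T + 1) * q.num - b ^ i * q.num = q.den * c := by exact_mod_cast hc
  have hden : (q.den : ℝ) ≠ 0 := by positivity
  rw [Nat.add_sub_cancel_left, ← Rat.num_div_den q]
  push_cast
  field_simp
  linear_combination (b : ℝ) ^ k * hc'

namespace Real

variable {b : ℕ}

theorem mul_ofDigits_eq_add_ofDigits_succ (a : ℕ → Fin b) :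
    b * ofDigits a = a 0 + ofDigits (fun i ↦ a (i + 1)) := by
  have hb : (b : ℝ) ≠ 0 := by exact_mod_cast (Fin.pos (a 0)).ne'
  rw [ofDigits_eq_sum_add_ofDigits a 1]
  simp only [Finset.range_one, ofDigitsTerm, Finset.sum_singleton, zero_add, pow_one]
  field_simp

theorem exists_pow_mul_ofDigits_eq_natCast_add (a : ℕ → Fin b) (m : ℕ) :
    ∃ z : ℕ, b ^ m * ofDigits a = z + ofDigits (fun i ↦ a (i + m)) := by
  induction m with
  | zero => exact ⟨0, by simp⟩
  | succ m ih =>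
    obtain ⟨z, hz⟩ := ih
    refine ⟨b * z + a m, ?_⟩
    rw [pow_succ', mul_assoc, hz, mul_add, mul_ofDigits_eq_add_ofDigits_succ]
    simp only [zero_add, Nat.add_right_comm _ 1 m, ← add_assoc]
    push_cast
    ring

theorem ofDigits_lt_one {a : ℕ → Fin b} {j : ℕ} (h : (a j : ℕ) < b - 1) : ofDigits a < 1 := by
  have hb : 1 < b := by omega
  rw [← ofDigits_const_last_eq_one' hb]
  refine Summable.tsum_lt_tsum (i := j) (fun i => ?_) ?_ summable_ofDigitsTerm summable_ofDigitsTerm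
  · unfold ofDigitsTerm
    gcongr
    exact Nat.le_sub_one_of_lt (a i).isLt
  · unfold ofDigitsTerm
    gcongr

theorem fract_pow_mul_ofDigits {a : ℕ → Fin b} {m : ℕ} (h : ofDigits (fun i ↦ a (i + m)) < 1) :
    Int.fract (b ^ m * ofDigits a) = ofDigits (fun i ↦ a (i + m)) := by
  obtain ⟨z, hz⟩ := exists_pow_mul_ofDigits_eq_natCast_add a m
  refine Int.fract_eq_iff.2 ⟨ofDigits_nonneg _, h, z, ?_⟩
  rw [hz, add_sub_cancel_right, Int.cast_natCast]

theorem floor_mul_ofDigits {a : ℕ → Fin b} (h : ofDigits (fun i ↦ a (i + 1)) < 1) :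
    ⌊b * ofDigits a⌋₊ = a 0 := by
  have htail := ofDigits_nonneg (fun i ↦ a (i + 1))
  rw [mul_ofDigits_eq_add_ofDigits_succ, Nat.floor_eq_iff (by positivity)]
  constructor <;> linarith

theorem eventuallyPeriodic_of_ofDigits_eq_ratCast {a : ℕ → Fin b} {q : ℚ} (h : ofDigits a = q) :
    EventuallyPeriodic a := by
  by_cases hlast : ∃ N, ∀ n ≥ N, (a n : ℕ) = b - 1
  · obtain ⟨N, hN⟩ := hlast
    exact ⟨N, 1, one_pos, fun n hn => Fin.ext ((hN _ (by omega)).trans (hN n hn).symm)⟩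
  push Not at hlast
  have htail : ∀ m, ofDigits (fun i ↦ a (i + m)) < 1 := by
    intro m
    obtain ⟨n, hn, hne⟩ := hlast m
    obtain ⟨j, rfl⟩ := Nat.exists_eq_add_of_le' hn
    exact ofDigits_lt_one (j := j) (by have := (a (j + m)).isLt; omega)
  -- No tail is `0.(b-1)(b-1)… = 1`, so the `m`-th tail is `fract (b ^ m * q)` and determines `a m`.
  have hdigit : ∀ m, (a m : ℕ) = ⌊b * Int.fract ((b : ℝ) ^ m * q)⌋₊ := by
    intro m
    rw [← h, fract_pow_mul_ofDigits (htail m), floor_mul_ofDigits, zero_add]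
    simpa only [add_assoc, add_comm 1 m] using htail (m + 1)
  obtain ⟨N, T, hT, hper⟩ := eventuallyPeriodic_fract_pow_mul_ratCast b q
  beta_reduce at hper
  exact ⟨N, T, hT, fun n hn => Fin.ext (by rw [hdigit, hdigit, hper n hn])⟩

end Real

theorem stmt_0_general (f : ℕ → ℤ)
    (hfmul : ∀ m n : ℕ, 1 ≤ m → 1 ≤ n → f (m * n) = f m * f n)
    (hfval : ∀ n : ℕ, 1 ≤ n → f n = 1 ∨ f n = -1)
    (p : ℕ) (hp : p.Prime) (hfp : f p = -1) :
    Irrational (∑' n : ℕ, ((1 + (f (n + 1) : ℝ)) / 2) * (2 : ℝ)⁻¹ ^ (n + 1)) := by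
  rintro ⟨q, hq⟩
  let a : ℕ → Fin 2 := fun n => if f (n + 1) = 1 then 1 else 0
  have hfa : (fun n => f (n + 1)) = (fun i : Fin 2 => if i = 1 then 1 else -1) ∘ a := by
    funext n
    rcases hfval (n + 1) n.succ_pos with h | h <;> simp [a, h]
  have hdigits : Real.ofDigits a = q := by
    rw [hq, Real.ofDigits]
    refine tsum_congr fun n => ?_
    rcases hfval (n + 1) n.succ_pos with h | h <;> simp [a, h, Real.ofDigitsTerm]
  have hf0 : ∀ n, 1 ≤ n → f n ≠ 0 := fun n hn => by rcases hfval n hn with h | h <;> simp [h]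
  refine not_eventuallyPeriodic_of_mul hfmul hf0 hp.one_lt (by rw [hfp]; decide) ?_
  exact EventuallyPeriodic.of_comp_add_one <|
    hfa ▸ (Real.eventuallyPeriodic_of_ofDigits_eq_ratCast hdigits).comp _

/-- If `f : ℕ → {-1,1}` is completely multiplicative with `f p = -1`
for at least one prime `p`, then `φ = Σ ((1+f n)/2) 2^(-n)` is irrational. -/
theorem stmt_0 (f : ℕ → ℤ)
    (hf1 : f 1 = 1)
    (hfmul : ∀ m n : ℕ, 1 ≤ m → 1 ≤ n → f (m * n) = f m * f n)
    (hfval : ∀ n : ℕ, 1 ≤ n → f n = 1 ∨ f n = -1)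
    (p : ℕ) (hp : p.Prime) (hfp : f p = -1) :
    Irrational (∑' n : ℕ, ((1 + (f (n + 1) : ℝ)) / 2) * (2 : ℝ)⁻¹ ^ (n + 1)) :=
  stmt_0_general f hfmul hfval p hp hfp
end

section
/- The Liouville number l = Σ_{n=1}^∞ ((1 + λ(n))/2) · 2^(-n) is irrational, where λ is the Liouville function. -/
open ArithmeticFunction

/-! If `l` were rational, the fractional parts of `2 ^ m * l` would lie in the finite set
`(1 / den) ℤ ∩ [0, 1)`, so two of them coincide and from then on they repeat with some period `T`.
Unless they end in `1, 1, 1, …` (which is periodic anyway), the binary digits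
`(1 + λ (n + 1)) / 2` of `l` are read off these fractional parts, so `λ` would be eventually
`T`-periodic. Complete multiplicativity then forces `λ (n + 1) = λ n` for large `n`, i.e. `λ` is eventually constant,
contradicting `λ (2 n) = -λ n`. -/

section FractionalParts

variable {K : Type*} [Field K] [LinearOrder K] [IsStrictOrderedRing K] [FloorRing K]

theorem fract_intCast_mul_eq_of_fract_eq {a c : K} (h : Int.fract a = Int.fract c) (n : ℤ) :
    Int.fract (n * a) = Int.fract (n * c) := by
  obtain ⟨z, hz⟩ := Int.fract_eq_fract.1 h
  exact Int.fract_eq_fract.2 ⟨n * z, by rw [← mul_sub, hz]; push_cast; ring⟩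

theorem exists_lt_fract_pow_mul_eq (b : ℤ) (q : ℚ) :
    ∃ i j : ℕ, i < j ∧ Int.fract ((b : K) ^ i * q) = Int.fract ((b : K) ^ j * q) := by
  have hfract (m : ℕ) :
      Int.fract ((b : K) ^ m * q) = ((b ^ m * q.num % q.den : ℤ) : K) / q.den := by
    rw [← Int.fract_div_intCast_eq_div_intCast_mod, Rat.cast_def]
    push_cast
    ring_nf
  obtain ⟨i, j, hij, hmod⟩ := Set.Finite.exists_lt_map_eq_of_forall_mem
    (f := fun m : ℕ => b ^ m * q.num % q.den) (t := Set.Ico (0 : ℤ) q.den)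
    (fun m => ⟨Int.emod_nonneg _ (by exact_mod_cast q.den_nz),
      Int.emod_lt_of_pos _ (by exact_mod_cast q.pos)⟩) (Set.finite_Ico _ _)
  exact ⟨i, j, hij, by rw [hfract, hfract, hmod]⟩

end FractionalParts

section BinaryExpansion

variable {d : ℕ → ℝ}

noncomputable def binaryTail (d : ℕ → ℝ) (m : ℕ) : ℝ :=
  ∑' k, d (m + k) * 2⁻¹ ^ (k + 1)

theorem summable_inv_two_pow_succ : Summable fun k : ℕ => (2 : ℝ)⁻¹ ^ (k + 1) :=
  (summable_nat_add_iff 1).2 (summable_geometric_of_lt_one (by norm_num) (by norm_num))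

theorem tsum_inv_two_pow_succ : ∑' k : ℕ, (2 : ℝ)⁻¹ ^ (k + 1) = 1 := by
  simp only [pow_succ, tsum_mul_right, tsum_geometric_inv_two]
  norm_num

theorem summable_binaryTail (h0 : ∀ n, 0 ≤ d n) (h1 : ∀ n, d n ≤ 1) (m : ℕ) :
    Summable fun k => d (m + k) * (2 : ℝ)⁻¹ ^ (k + 1) :=
  .of_nonneg_of_le (fun k => mul_nonneg (h0 _) (by positivity))
    (fun k => mul_le_of_le_one_left (by positivity) (h1 _)) summable_inv_two_pow_succ

theorem binaryTail_nonneg (h0 : ∀ n, 0 ≤ d n) (m : ℕ) : 0 ≤ binaryTail d m :=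
  tsum_nonneg fun k => mul_nonneg (h0 _) (by positivity)

theorem binaryTail_le_one (h0 : ∀ n, 0 ≤ d n) (h1 : ∀ n, d n ≤ 1) (m : ℕ) :
    binaryTail d m ≤ 1 :=
  tsum_inv_two_pow_succ ▸ (summable_binaryTail h0 h1 m).tsum_le_tsum
    (fun k => mul_le_of_le_one_left (by positivity) (h1 _)) summable_inv_two_pow_succ

theorem binaryTail_eq (h0 : ∀ n, 0 ≤ d n) (h1 : ∀ n, d n ≤ 1) (m : ℕ) :
    binaryTail d m = (d m + binaryTail d (m + 1)) / 2 := by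
  rw [binaryTail, (summable_binaryTail h0 h1 m).tsum_eq_zero_add, binaryTail, div_eq_mul_inv,
    add_mul, ← tsum_mul_right]
  congr 1
  · simp
  · congr 1; ext k; rw [← add_assoc, add_right_comm, pow_succ _ (k + 1), mul_assoc]

theorem binaryTail_lt_one (h0 : ∀ n, 0 ≤ d n) (h1 : ∀ n, d n ≤ 1)
    (hzero : ∀ m, ∃ k, m ≤ k ∧ d k = 0) (m : ℕ) : binaryTail d m < 1 := by
  obtain ⟨k, hmk, hdk⟩ := hzero m
  induction hmk using Nat.decreasingInduction with
  | self =>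
    rw [binaryTail_eq h0 h1, hdk]
    linarith [binaryTail_le_one h0 h1 (k + 1)]
  | of_succ n _ ih =>
    rw [binaryTail_eq h0 h1]
    linarith [h1 n]

theorem nonneg_and_le_one_of_forall_eq_zero_or_eq_one (hd : ∀ n, d n = 0 ∨ d n = 1) :
    (∀ n, 0 ≤ d n) ∧ ∀ n, d n ≤ 1 :=
  ⟨fun n => by rcases hd n with h | h <;> simp [h], fun n => by rcases hd n with h | h <;> simp [h]⟩

theorem eq_of_binaryTail_eq (hd : ∀ n, d n = 0 ∨ d n = 1) (hzero : ∀ m, ∃ k, m ≤ k ∧ d k = 0)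
    {m n : ℕ} (h : binaryTail d m = binaryTail d n) : d m = d n := by
  obtain ⟨h0, h1⟩ := nonneg_and_le_one_of_forall_eq_zero_or_eq_one hd
  rw [binaryTail_eq h0 h1 m, binaryTail_eq h0 h1 n] at h
  rcases hd m with hm | hm <;> rcases hd n with hn | hn <;> rw [hm, hn] at h ⊢ <;>
  linarith [binaryTail_nonneg h0 (m + 1), binaryTail_nonneg h0 (n + 1),
    binaryTail_lt_one h0 h1 hzero (m + 1), binaryTail_lt_one h0 h1 hzero (n + 1)]

theorem fract_two_pow_mul_binaryTail (hd : ∀ n, d n = 0 ∨ d n = 1)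
    (hzero : ∀ m, ∃ k, m ≤ k ∧ d k = 0) (m : ℕ) :
    Int.fract (2 ^ m * binaryTail d 0) = binaryTail d m := by
  obtain ⟨h0, h1⟩ := nonneg_and_le_one_of_forall_eq_zero_or_eq_one hd
  refine Int.fract_eq_iff.2 ⟨binaryTail_nonneg h0 m, binaryTail_lt_one h0 h1 hzero m, ?_⟩
  induction m with
  | zero => exact ⟨0, by simp⟩
  | succ m ih =>
    obtain ⟨z, hz⟩ := ih
    have hstep : 2 ^ (m + 1) * binaryTail d 0 - binaryTail d (m + 1) =
        2 * (2 ^ m * binaryTail d 0 - binaryTail d m) + d m := by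
      rw [binaryTail_eq h0 h1 m]; ring
    rcases hd m with hm | hm
    · exact ⟨2 * z, by rw [hstep, hz, hm]; push_cast; ring⟩
    · exact ⟨2 * z + 1, by rw [hstep, hz, hm]; push_cast; ring⟩

theorem irrational_binaryTail_zero (hd : ∀ n, d n = 0 ∨ d n = 1)
    (hper : ¬ ∃ N T, 0 < T ∧ ∀ n, N ≤ n → d (n + T) = d n) : Irrational (binaryTail d 0) := by
  have hzero : ∀ m, ∃ k, m ≤ k ∧ d k = 0 := by
    by_contra! h
    obtain ⟨m, hm⟩ := h
    have hone : ∀ n, m ≤ n → d n = 1 := fun n hn => (hd n).resolve_left (hm n hn)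
    exact hper ⟨m, 1, one_pos, fun n hn => by rw [hone n hn, hone (n + 1) (by omega)]⟩
  rintro ⟨q, hq⟩
  obtain ⟨i, j, hij, hfract⟩ := exists_lt_fract_pow_mul_eq (K := ℝ) 2 q
  refine hper ⟨i, j - i, by omega, fun n hn => eq_of_binaryTail_eq hd hzero ?_⟩
  have hshift := fract_intCast_mul_eq_of_fract_eq hfract (2 ^ (n - i))
  rw [← fract_two_pow_mul_binaryTail hd hzero (n + (j - i)),
    ← fract_two_pow_mul_binaryTail hd hzero n, ← hq]
  push_cast at hshift
  rw [← mul_assoc, ← mul_assoc, ← pow_add, ← pow_add, Nat.sub_add_cancel hn,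
    show n - i + j = n + (j - i) by omega] at hshift
  exact hshift.symm

end BinaryExpansion

theorem liouville_eq_one_or_eq_neg_one {n : ℕ} (hn : n ≠ 0) :
    liouville n = 1 ∨ liouville n = -1 := by
  rw [liouville_apply hn]
  exact neg_one_pow_eq_or ℤ _

theorem liouville_two_mul (n : ℕ) : liouville (2 * n) = -liouville n := by
  rw [liouville_apply_mul, liouville_apply two_ne_zero, cardFactors_apply_prime Nat.prime_two]
  ring

/-- Compare `λ (T * n)` with `λ (T * (n + 1)) = λ (T * n + T)` and cancel `λ T`. -/
theorem liouville_succ_eq_of_periodic {N T : ℕ} (hT : 0 < T)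
    (hper : ∀ n, N ≤ n → liouville (n + T) = liouville n) {n : ℕ} (hn : N ≤ n) :
    liouville (n + 1) = liouville n := by
  have h := hper (T * n) (hn.trans (Nat.le_mul_of_pos_left n hT))
  rw [← mul_add_one, liouville_apply_mul, liouville_apply_mul] at h
  exact mul_left_cancel₀ (liouville_ne_zero hT.ne') h

theorem not_liouville_eventually_periodic :
    ¬ ∃ N T, 0 < T ∧ ∀ n, N ≤ n → liouville (n + T) = liouville n := by
  rintro ⟨N, T, hT, hper⟩
  set M := N + 1
  have hconst : ∀ n, M ≤ n → liouville n = liouville M := by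
    intro n hn
    induction n, hn using Nat.le_induction with
    | base => rfl
    | succ n hn ih => rw [liouville_succ_eq_of_periodic hT hper (by omega), ih]
  have h := hconst (2 * M) (by omega)
  rw [liouville_two_mul] at h
  exact liouville_ne_zero (show M ≠ 0 by omega) (by linarith)

/-- The Liouville number `l = Σ ((1+λ(n))/2) 2^(-n)` is irrational,
where `λ(n) = (-1)^Ω(n)` is the Liouville function. -/
theorem stmt_1 :
    Irrational (∑' n : ℕ,
      ((1 + ((-1 : ℝ) ^ (ArithmeticFunction.cardFactors (n + 1)))) / 2)
        * (2 : ℝ)⁻¹ ^ (n + 1)) := by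
  set d : ℕ → ℝ := fun n => (1 + liouville (n + 1)) / 2
  have hsum : ∑' n : ℕ, ((1 + ((-1 : ℝ) ^ (cardFactors (n + 1)))) / 2) * (2 : ℝ)⁻¹ ^ (n + 1) =
      binaryTail d 0 := by
    simp [binaryTail, d, liouville_apply]
  rw [hsum]
  refine irrational_binaryTail_zero (fun n => ?_) ?_
  · rcases liouville_eq_one_or_eq_neg_one n.succ_ne_zero with h | h <;> simp [d, h]
  · rintro ⟨N, T, hT, hper⟩
    refine not_liouville_eventually_periodic ⟨N + 1, T, hT, fun n hn => ?_⟩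
    obtain ⟨k, rfl⟩ : ∃ k, n = k + 1 := ⟨n - 1, by omega⟩
    have hk := hper k (by omega)
    simp only [d, add_right_comm k T 1] at hk
    exact_mod_cast (by linarith : ((liouville (k + 1 + T) : ℤ) : ℝ) = liouville (k + 1))
end

section
/- The Gaussian Liouville sequence satisfies the recurrences g(1) = 1, g(2n) = g(n) for all n ≥ 1, and g(4k+1) = -g(4k+3) for all k ≥ 0. -/
/-! The odd part of the claim is the statement that `g` agrees with the character `χ₄` on odd
numbers: both are multiplicative and agree on odd primes, and odd numbers only have odd prime
factors. Then `g (4k+1) = χ₄ 1 = 1` and `g (4k+3) = χ₄ 3 = -1`, while `g (2n) = g 2 * g n = g n`. -/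

open ZMod

theorem eq_of_odd_of_map_mul_of_eq_on_primes {M : Type*} [Monoid M] {f g : ℕ → M}
    (h1 : f 1 = g 1)
    (hfmul : ∀ m n : ℕ, 1 ≤ m → 1 ≤ n → f (m * n) = f m * f n)
    (hgmul : ∀ m n : ℕ, 1 ≤ m → 1 ≤ n → g (m * n) = g m * g n)
    (hp : ∀ p : ℕ, p.Prime → Odd p → f p = g p) :
    ∀ n : ℕ, Odd n → f n = g n := by
  intro n
  induction n using Nat.recOnMul with
  | zero => simp
  | one => exact fun _ => h1
  | prime p hprime => exact hp p hprime
  | mul a b iha ihb =>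
    intro hab
    obtain ⟨ha, hb⟩ := Nat.odd_mul.mp hab
    rw [hfmul a b ha.pos hb.pos, hgmul a b ha.pos hb.pos, iha ha, ihb hb]

/-- The Gaussian Liouville sequence satisfies `g 1 = 1`,
`g (2n) = g n` for `n ≥ 1`, and `g (4k+1) = -g (4k+3)` for `k ≥ 0`. -/
theorem stmt_3 (g : ℕ → ℤ)
    (hg1 : g 1 = 1)
    (hgmul : ∀ m n : ℕ, 1 ≤ m → 1 ≤ n → g (m * n) = g m * g n)
    (hgp : ∀ p : ℕ, p.Prime → g p = if p % 4 = 3 then -1 else 1) :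
    g 1 = 1 ∧ (∀ n : ℕ, 1 ≤ n → g (2 * n) = g n) ∧
      (∀ k : ℕ, g (4 * k + 1) = -g (4 * k + 3)) := by
  have hodd : ∀ n : ℕ, Odd n → g n = χ₄ n :=
    eq_of_odd_of_map_mul_of_eq_on_primes (by simp [hg1])
      hgmul (fun m n _ _ => by rw [Nat.cast_mul, map_mul])
      (fun p hp _ => by
        rw [hgp p hp, χ₄_nat_eq_if_mod_four]
        split_ifs <;> grind)
  refine ⟨hg1, fun n hn => ?_, fun k => ?_⟩
  · rw [hgmul 2 n (by norm_num) hn, hgp 2 Nat.prime_two]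
    norm_num
  · rw [hodd _ (by grind), hodd _ (by grind), χ₄_nat_one_mod_four (by omega),
      χ₄_nat_three_mod_four (by omega), neg_neg]
end

section
/- For every complex z with |z| < 1, the generating function G(z) = Σ_{n=1}^∞ g(n) z^n of the Gaussian Liouville sequence satisfies the functional equation G(z²) = G(z) - z/(1 + z²). -/
/-!
Split `G(z) = Σ g(n) zⁿ` by the parity of `n`. Since `g 2 = 1`, the even terms `g(2k) z²ᵏ`
sum to `G(z²)`. On odd numbers `g` agrees with the character `χ₄` (both are multiplicative and
agree on odd primes), so `g(2k + 1) = (-1)ᵏ` and the odd terms form the geometric series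
`Σ (-1)ᵏ z²ᵏ⁺¹ = z / (1 + z²)`.
-/

section CompletelyMultiplicative

variable {g : ℕ → ℤ} (hg1 : g 1 = 1)
  (hgmul : ∀ m n : ℕ, 1 ≤ m → 1 ≤ n → g (m * n) = g m * g n)
include hg1 hgmul

theorem abs_eq_one_of_abs_prime_eq_one (hgp : ∀ p : ℕ, p.Prime → |g p| = 1) {n : ℕ}
    (hn : n ≠ 0) : |g n| = 1 := by
  induction n using Nat.recOnMul with
  | zero => exact absurd rfl hn
  | one => simp [hg1]
  | prime p hp => exact hgp p hp
  | mul a b iha ihb =>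
    obtain ⟨ha, hb⟩ := mul_ne_zero_iff.mp hn
    rw [hgmul a b (Nat.one_le_iff_ne_zero.mpr ha) (Nat.one_le_iff_ne_zero.mpr hb), abs_mul,
      iha ha, ihb hb, one_mul]

theorem eq_χ₄_of_odd (hgp : ∀ p : ℕ, p.Prime → g p = if p % 4 = 3 then -1 else 1) {n : ℕ}
    (hn : Odd n) : g n = ZMod.χ₄ n := by
  induction n using Nat.recOnMul with
  | zero => exact absurd hn Nat.not_odd_zero
  | one => simp [hg1]
  | prime p hp =>
    rw [hgp p hp, ZMod.χ₄_nat_eq_if_mod_four]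
    have hp2 := Nat.odd_iff.mp hn
    split_ifs <;> omega
  | mul a b iha ihb =>
    obtain ⟨ha, hb⟩ := Nat.odd_mul.mp hn
    rw [hgmul a b ha.pos hb.pos, iha ha, ihb hb, Nat.cast_mul, map_mul]

theorem apply_two_mul_add_one (hgp : ∀ p : ℕ, p.Prime → g p = if p % 4 = 3 then -1 else 1)
    (k : ℕ) : g (2 * k + 1) = (-1) ^ k := by
  rw [eq_χ₄_of_odd hg1 hgmul hgp (odd_two_mul_add_one k), ZMod.χ₄_eq_neg_one_pow (by omega)]
  congr 1
  omega

end CompletelyMultiplicative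

theorem summable_mul_pow_succ_of_norm_le_one {c : ℕ → ℂ} (hc : ∀ n, ‖c n‖ ≤ 1) {w : ℂ}
    (hw : ‖w‖ < 1) : Summable fun n => c n * w ^ (n + 1) := by
  have hgeom := (summable_nat_add_iff 1).mpr (summable_geometric_of_lt_one (norm_nonneg w) hw)
  refine Summable.of_norm_bounded hgeom fun n => ?_
  rw [norm_mul, norm_pow]
  exact mul_le_of_le_one_left (by positivity) (hc n)

theorem hasSum_neg_one_pow_mul_pow_two_mul_add_one {z : ℂ} (hz : ‖z‖ < 1) :
    HasSum (fun k : ℕ => (-1) ^ k * z ^ (2 * k + 1)) (z / (1 + z ^ 2)) := by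
  have hterm : (fun k : ℕ => (-1) ^ k * z ^ (2 * k + 1)) = fun k => z * (-z ^ 2) ^ k := by
    ext k
    rw [neg_pow, pow_succ, pow_mul]
    ring
  have hz2 : ‖-z ^ 2‖ < 1 := by
    rw [norm_neg, norm_pow]
    exact pow_lt_one₀ (norm_nonneg z) hz two_ne_zero
  rw [hterm, div_eq_mul_inv, ← sub_neg_eq_add]
  exact (hasSum_geometric_of_norm_lt_one hz2).mul_left z

/-- For `|z| < 1`, `G(z²) = G(z) - z/(1+z²)`, where
`G(z) = Σ_{n≥1} g(n) zⁿ` and `g` is the Gaussian Liouville function. -/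
theorem stmt_5 (g : ℕ → ℤ)
    (hg1 : g 1 = 1)
    (hgmul : ∀ m n : ℕ, 1 ≤ m → 1 ≤ n → g (m * n) = g m * g n)
    (hgp : ∀ p : ℕ, p.Prime → g p = if p % 4 = 3 then -1 else 1)
    (z : ℂ) (hz : ‖z‖ < 1) :
    (∑' n : ℕ, (g (n + 1) : ℂ) * (z ^ 2) ^ (n + 1))
      = (∑' n : ℕ, (g (n + 1) : ℂ) * z ^ (n + 1)) - z / (1 + z ^ 2) := by
  have hg2 : g 2 = 1 := by simp [hgp 2 Nat.prime_two]
  have hnorm (n : ℕ) : ‖(g (n + 1) : ℂ)‖ ≤ 1 := by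
    rw [Complex.norm_intCast, ← Int.cast_abs, abs_eq_one_of_abs_prime_eq_one hg1 hgmul
      (fun p hp => by rw [hgp p hp]; split_ifs <;> simp) n.succ_ne_zero, Int.cast_one]
  have hz2 : ‖z ^ 2‖ < 1 := by
    rw [norm_pow]
    exact pow_lt_one₀ (norm_nonneg z) hz two_ne_zero
  have hodd :
      HasSum (fun k : ℕ => (g (2 * k + 1) : ℂ) * z ^ (2 * k + 1)) (z / (1 + z ^ 2)) := by
    simpa only [apply_two_mul_add_one hg1 hgmul hgp, Int.cast_pow, Int.cast_neg, Int.cast_one]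
      using hasSum_neg_one_pow_mul_pow_two_mul_add_one hz
  have heven : HasSum (fun k : ℕ => (g (2 * k + 1 + 1) : ℂ) * z ^ (2 * k + 1 + 1))
      (∑' n : ℕ, (g (n + 1) : ℂ) * (z ^ 2) ^ (n + 1)) := by
    convert (summable_mul_pow_succ_of_norm_le_one hnorm hz2).hasSum using 2 with k
    rw [show 2 * k + 1 + 1 = 2 * (k + 1) by ring, hgmul 2 (k + 1) one_le_two k.succ_pos, hg2,
      one_mul, pow_mul]
  rw [(HasSum.even_add_odd (f := fun n : ℕ => (g (n + 1) : ℂ) * z ^ (n + 1)) hodd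
    heven).tsum_eq]
  ring
end

section
/- For every complex z with |z| < 1, the generating function T(z) = Σ_{n=1}^∞ t(n) z^n satisfies T(z³) = T(z) - z/(1 + z + z²). -/
/-!
For `n` prime to `3`, multiplicativity and the values at primes force `t n = ±1` according to
`n mod 3`, while `t (3 * n) = t n`. Splitting `T(z) = ∑ t(n) zⁿ` by residue mod `3`, the classes
`n ≡ 1, 2` contribute `∑ₖ (z^{3k+1} - z^{3k+2}) = (z - z²)/(1 - z³) = z/(1 + z + z²)`, and the class
`n ≡ 0` contributes `T(z³)`.
-/

open Finset

def signModThree (n : ℕ) : ℤ := if n % 3 = 2 then -1 else 1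

theorem signModThree_mul {m n : ℕ} (hm : ¬ 3 ∣ m) (hn : ¬ 3 ∣ n) :
    signModThree (m * n) = signModThree m * signModThree n := by
  have hmn := Nat.mul_mod m n 3
  have hm3 : m % 3 = 1 ∨ m % 3 = 2 := by omega
  have hn3 : n % 3 = 1 ∨ n % 3 = 2 := by omega
  rcases hm3 with hm3 | hm3 <;> rcases hn3 with hn3 | hn3 <;> simp_all [signModThree]

section MultiplicativeOnPositive

variable {t : ℕ → ℤ}

theorem apply_eq_signModThree_of_not_three_dvd (ht1 : t 1 = 1)
    (htmul : ∀ m n : ℕ, 1 ≤ m → 1 ≤ n → t (m * n) = t m * t n)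
    (htp : ∀ p : ℕ, p.Prime → p ≠ 3 → t p = if p % 3 = 2 then -1 else 1)
    {n : ℕ} (hn : ¬ 3 ∣ n) : t n = signModThree n := by
  induction n using Nat.recOnMul with
  | zero => exact absurd (dvd_zero 3) hn
  | one => simp [ht1, signModThree]
  | prime p hp => exact htp p hp (by rintro rfl; exact hn dvd_rfl)
  | mul a b iha ihb =>
    have ha : ¬ 3 ∣ a := fun h ↦ hn (h.mul_right b)
    have hb : ¬ 3 ∣ b := fun h ↦ hn (h.mul_left a)
    rw [htmul a b (Nat.pos_of_ne_zero (by rintro rfl; simp at ha))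
      (Nat.pos_of_ne_zero (by rintro rfl; simp at hb)), iha ha, ihb hb, signModThree_mul ha hb]

theorem abs_apply_eq_one (ht1 : t 1 = 1)
    (htmul : ∀ m n : ℕ, 1 ≤ m → 1 ≤ n → t (m * n) = t m * t n) (ht3 : t 3 = 1)
    (htp : ∀ p : ℕ, p.Prime → p ≠ 3 → t p = if p % 3 = 2 then -1 else 1)
    {n : ℕ} (hn : 0 < n) : |t n| = 1 := by
  induction n using Nat.recOnMul with
  | zero => exact absurd hn (lt_irrefl 0)
  | one => simp [ht1]
  | prime p hp =>
    by_cases h3 : p = 3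
    · simp [h3, ht3]
    · rw [htp p hp h3]
      split_ifs <;> simp
  | mul a b iha ihb =>
    have ha : 0 < a := Nat.pos_of_mul_pos_right hn
    have hb : 0 < b := Nat.pos_of_mul_pos_left hn
    rw [htmul a b ha hb, abs_mul, iha ha, ihb hb, one_mul]

theorem sum_range_three_intCast_mul_pow {R : Type*} [CommRing R] (ht1 : t 1 = 1)
    (htmul : ∀ m n : ℕ, 1 ≤ m → 1 ≤ n → t (m * n) = t m * t n) (ht3 : t 3 = 1)
    (htp : ∀ p : ℕ, p.Prime → p ≠ 3 → t p = if p % 3 = 2 then -1 else 1) (z : R) (k : ℕ) :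
    ∑ i ∈ range 3, (t (3 * k + i + 1) : R) * z ^ (3 * k + i + 1)
      = (z ^ (3 * k + 1) - z ^ (3 * k + 2)) + (t (k + 1) : R) * (z ^ 3) ^ (k + 1) := by
  have h1 : t (3 * k + 1) = 1 := by
    rw [apply_eq_signModThree_of_not_three_dvd ht1 htmul htp (by omega)]
    simp [signModThree]
  have h2 : t (3 * k + 2) = -1 := by
    rw [apply_eq_signModThree_of_not_three_dvd ht1 htmul htp (by omega)]
    simp [signModThree]
  have h3 : t (3 * k + 3) = t (k + 1) := by
    rw [show 3 * k + 3 = 3 * (k + 1) by ring, htmul 3 _ (by norm_num) (by omega), ht3, one_mul]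
  simp only [sum_range_succ, sum_range_zero, add_assoc, Nat.reduceAdd, h1, h2, h3]
  rw [← pow_mul]
  push_cast
  ring

end MultiplicativeOnPositive

theorem HasSum.sum_range_mul_add {M : Type*} [AddCommMonoid M] [TopologicalSpace M]
    [ContinuousAdd M] [RegularSpace M] {f : ℕ → M} {a : M} (hf : HasSum f a) (m : ℕ) [NeZero m] :
    HasSum (fun k ↦ ∑ i ∈ range m, f (m * k + i)) a := by
  refine ((Nat.divModEquiv m).symm.hasSum_iff.mpr hf).prod_fiberwise fun k ↦ ?_
  simpa [Nat.divModEquiv_symm_apply, mul_comm, Fin.sum_univ_eq_sum_range (fun i ↦ f (m * k + i))]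
    using hasSum_fintype (fun i : Fin m ↦ f (k * m + i))

theorem summable_intCast_mul_pow_succ {t : ℕ → ℤ} (ht : ∀ n, |t (n + 1)| ≤ 1) {w : ℂ}
    (hw : ‖w‖ < 1) : Summable fun n ↦ (t (n + 1) : ℂ) * w ^ (n + 1) := by
  refine .of_norm_bounded ((summable_nat_add_iff 1).mpr
    (summable_geometric_of_lt_one (norm_nonneg w) hw)) fun n ↦ ?_
  rw [norm_mul, norm_pow, Complex.norm_intCast]
  exact mul_le_of_le_one_left (by positivity) (by exact_mod_cast ht n)

theorem norm_pow_lt_one {R : Type*} [NormedDivisionRing R] {z : R} (hz : ‖z‖ < 1) {n : ℕ}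
    (hn : n ≠ 0) : ‖z ^ n‖ < 1 := by
  rw [norm_pow]
  exact pow_lt_one₀ (norm_nonneg z) hz hn

theorem one_add_add_sq_ne_zero {K : Type*} [NormedField K] {z : K} (hz : ‖z‖ < 1) :
    1 + z + z ^ 2 ≠ 0 := by
  intro h
  have hz3 : z ^ 3 = 1 := by linear_combination (z - 1) * h
  exact (norm_pow_lt_one hz three_ne_zero).ne (by rw [hz3, norm_one])

theorem hasSum_pow_three_mul_add_one_sub {K : Type*} [NormedField K] {z : K} (hz : ‖z‖ < 1) :
    HasSum (fun k ↦ z ^ (3 * k + 1) - z ^ (3 * k + 2)) (z / (1 + z + z ^ 2)) := by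
  have hz1 : 1 - z ≠ 0 := fun h ↦ by simp [← eq_of_sub_eq_zero h] at hz
  have hq := one_add_add_sq_ne_zero hz
  have hterm (k : ℕ) : (z - z ^ 2) * (z ^ 3) ^ k = z ^ (3 * k + 1) - z ^ (3 * k + 2) := by
    rw [← pow_mul]
    ring
  have hsum : (z - z ^ 2) * (1 - z ^ 3)⁻¹ = z / (1 + z + z ^ 2) := by
    rw [show 1 - z ^ 3 = (1 - z) * (1 + z + z ^ 2) by ring]
    field_simp
  have h := (hasSum_geometric_of_norm_lt_one (norm_pow_lt_one hz three_ne_zero)).mul_left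
    (z - z ^ 2)
  rw [hsum] at h
  simpa only [hterm] using h

/-- For `|z| < 1`, `T(z³) = T(z) - z/(1 + z + z²)`, where
`T(z) = Σ_{n≥1} t(n) zⁿ`. -/
theorem stmt_11 (t : ℕ → ℤ)
    (ht1 : t 1 = 1)
    (htmul : ∀ m n : ℕ, 1 ≤ m → 1 ≤ n → t (m * n) = t m * t n)
    (ht3 : t 3 = 1)
    (htp : ∀ p : ℕ, p.Prime → p ≠ 3 → t p = if p % 3 = 2 then -1 else 1)
    (z : ℂ) (hz : ‖z‖ < 1) :
    (∑' n : ℕ, (t (n + 1) : ℂ) * (z ^ 3) ^ (n + 1))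
      = (∑' n : ℕ, (t (n + 1) : ℂ) * z ^ (n + 1)) - z / (1 + z + z ^ 2) := by
  have hbound (n : ℕ) : |t (n + 1)| ≤ 1 := (abs_apply_eq_one ht1 htmul ht3 htp n.succ_pos).le
  have hsplit := (summable_intCast_mul_pow_succ hbound hz).hasSum.sum_range_mul_add 3
  simp only [sum_range_three_intCast_mul_pow ht1 htmul ht3 htp] at hsplit
  have hT3 := (summable_intCast_mul_pow_succ hbound (norm_pow_lt_one hz three_ne_zero)).hasSum
  linear_combination -(hsplit.unique ((hasSum_pow_three_mul_add_one_sub hz).add hT3))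
end

section
/- For every complex z with |z| < 1, Σ_{n=1}^∞ t(n) z^n = Σ_{k=0}^∞ z^(3^k)/(1 + z^(3^k) + z^(2·3^k)), where t is as below. -/
/-!
Let `τ(n) = (n' / 3)` be the Jacobi symbol of the `3`-free part `n'` of `n` (so `τ(0) = 0`); the
hypotheses force `t = τ` on positive integers. As `τ(3n) = τ(n)` and `τ(n) = (n / 3)` for `3 ∤ n`,
the series `F(z) = ∑ τ(n) zⁿ` satisfies `F(z) = G(z) + F(z³)` with `G(z) = ∑ (n / 3) zⁿ`, and
`G(z) = z / (1 + z + z²)` because `(n / 3)` is `3`-periodic. Iterating,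
`F(z) = ∑_{k<K} G(z^{3^k}) + F(z^{3^K})`, and the remainder is `O(|z|^K)`.
-/

open Filter Topology

section PowerSeries

variable {a f : ℕ → ℂ} {w z : ℂ}

lemma summable_mul_pow (ha : ∀ n, ‖a n‖ ≤ 1) (hw : ‖w‖ < 1) : Summable fun n => a n * w ^ n :=
  .of_norm_bounded (summable_geometric_of_lt_one (norm_nonneg w) hw) fun n => by
    rw [norm_mul, norm_pow]
    exact mul_le_of_le_one_left (by positivity) (ha n)

lemma tsum_mul_pow_succ (ha0 : a 0 = 0) : ∑' n, a (n + 1) * w ^ (n + 1) = ∑' n, a n * w ^ n :=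
  Nat.succ_injective.tsum_eq (f := fun n => a n * w ^ n) fun n hn =>
    (Nat.exists_eq_succ_of_ne_zero (by rintro rfl; simp [ha0] at hn)).imp fun _ h => h.symm

lemma norm_tsum_mul_pow_le (ha0 : a 0 = 0) (ha : ∀ n, ‖a n‖ ≤ 1) {r : ℝ} (hw : ‖w‖ ≤ r)
    (hr : r < 1) : ‖∑' n, a n * w ^ n‖ ≤ ‖w‖ * (1 - r)⁻¹ := by
  rw [← tsum_mul_pow_succ ha0]
  refine tsum_of_norm_bounded
    ((hasSum_geometric_of_lt_one ((norm_nonneg w).trans hw) hr).mul_left ‖w‖) fun n => ?_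
  rw [norm_mul, norm_pow, pow_succ']
  calc ‖a (n + 1)‖ * (‖w‖ * ‖w‖ ^ n) ≤ 1 * (‖w‖ * r ^ n) := by gcongr; exact ha _
    _ = ‖w‖ * r ^ n := one_mul _

lemma tsum_mul_pow_eq_add_of_apply_mul_eq {q : ℕ} (hq : q ≠ 0) (hf : ∀ n, ‖f n‖ ≤ 1)
    (hfq : ∀ n, f (q * n) = f n) (hw : ‖w‖ < 1) :
    ∑' n, f n * w ^ n = ∑' n, (if q ∣ n then 0 else f n) * w ^ n + ∑' n, f n * (w ^ q) ^ n := by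
  have hsplit : ∀ n, f n * w ^ n =
      (if q ∣ n then 0 else f n) * w ^ n + (if q ∣ n then f n else 0) * w ^ n := by
    intro n; split_ifs <;> simp
  rw [tsum_congr hsplit, Summable.tsum_add
    (summable_mul_pow (fun n => by split_ifs <;> simp [hf n]) hw)
    (summable_mul_pow (fun n => by split_ifs <;> simp [hf n]) hw)]
  congr 1
  rw [← (mul_right_injective₀ hq).tsum_eq]
  · simp [hfq, pow_mul]
  · intro n hn
    obtain ⟨m, rfl⟩ : q ∣ n := by by_contra h; simp [h] at hn
    exact ⟨m, rfl⟩

theorem hasSum_tsum_mul_pow_of_apply_mul_eq {q : ℕ} (hq : 1 < q) (hf0 : f 0 = 0)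
    (hf : ∀ n, ‖f n‖ ≤ 1) (hfq : ∀ n, f (q * n) = f n) (hz : ‖z‖ < 1) :
    HasSum (fun k => ∑' n, (if q ∣ n then 0 else f n) * (z ^ q ^ k) ^ n) (∑' n, f n * z ^ n) := by
  set F : ℂ → ℂ := fun w => ∑' n, f n * w ^ n
  set c : ℕ → ℂ := fun n => if q ∣ n then 0 else f n
  have hc0 : c 0 = 0 := by simp [c]
  have hc : ∀ n, ‖c n‖ ≤ 1 := fun n => by simp only [c]; split_ifs <;> simp [hf n]
  have hnorm : ∀ k, ‖z ^ q ^ k‖ ≤ ‖z‖ ^ k ∧ ‖z ^ q ^ k‖ ≤ ‖z‖ := fun k => by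
    rw [norm_pow]
    exact ⟨pow_le_pow_of_le_one (norm_nonneg z) hz.le (Nat.lt_pow_self hq).le,
      pow_le_of_le_one (norm_nonneg z) hz.le (pow_pos (by omega) k).ne'⟩
  have hbound : ∀ {a : ℕ → ℂ}, a 0 = 0 → (∀ n, ‖a n‖ ≤ 1) →
      ∀ k, ‖∑' n, a n * (z ^ q ^ k) ^ n‖ ≤ ‖z‖ ^ k * (1 - ‖z‖)⁻¹ := fun ha0 ha k =>
    (norm_tsum_mul_pow_le ha0 ha (hnorm k).2 hz).trans <|
      mul_le_mul_of_nonneg_right (hnorm k).1 (inv_nonneg.mpr (by linarith))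
  have hpartial : ∀ K, ∑ k ∈ Finset.range K, ∑' n, c n * (z ^ q ^ k) ^ n = F z - F (z ^ q ^ K) := by
    intro K
    induction K with
    | zero => simp
    | succ K ih =>
      have hstep : F (z ^ q ^ K) = ∑' n, c n * (z ^ q ^ K) ^ n + F (z ^ q ^ (K + 1)) := by
        rw [pow_succ, pow_mul]
        exact tsum_mul_pow_eq_add_of_apply_mul_eq (by omega) hf hfq ((hnorm K).2.trans_lt hz)
      rw [Finset.sum_range_succ, ih, hstep]
      ring
  have hsum : Summable fun k => ∑' n, c n * (z ^ q ^ k) ^ n :=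
    .of_norm_bounded ((summable_geometric_of_lt_one (norm_nonneg z) hz).mul_right _)
      (hbound hc0 hc)
  rw [hsum.hasSum_iff_tendsto_nat, funext hpartial]
  have hrem : Tendsto (fun K => F (z ^ q ^ K)) atTop (𝓝 0) :=
    squeeze_zero_norm (hbound hf0 hf) (by
      simpa using (tendsto_pow_atTop_nhds_zero_of_lt_one (norm_nonneg z) hz).mul_const _)
  simpa using tendsto_const_nhds.sub hrem

end PowerSeries

lemma norm_jacobiSym_le_one (a : ℤ) (b : ℕ) : ‖(jacobiSym a b : ℂ)‖ ≤ 1 := by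
  rcases jacobiSym.trichotomy a b with h | h | h <;> simp [h]

lemma tsum_jacobiSym_three_mul_pow {w : ℂ} (hw : ‖w‖ < 1) :
    ∑' n : ℕ, (jacobiSym n 3 : ℂ) * w ^ n = w / (1 + w + w ^ 2) := by
  have hS := summable_mul_pow (fun n => norm_jacobiSym_le_one n 3) hw
  have hperiod : ∀ n : ℕ, jacobiSym (n + 3 : ℕ) 3 = jacobiSym n 3 := fun n =>
    jacobiSym.mod_left' (by push_cast; simp)
  have hS3 := hS.sum_add_tsum_nat_add 3
  simp only [Finset.sum_range_succ, hperiod, pow_add, ← mul_assoc, tsum_mul_right] at hS3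
  norm_num at hS3
  have hw1 : 1 - w ≠ 0 := sub_ne_zero.mpr fun h => by simp [← h] at hw
  have hw3 : 1 + w + w ^ 2 ≠ 0 := fun h => by
    have : w ^ 3 = 1 := by linear_combination (w - 1) * h
    have h3 : ‖w ^ 3‖ < 1 := by rw [norm_pow]; exact pow_lt_one₀ (norm_nonneg w) hw (by norm_num)
    simp [this] at h3
  rw [eq_div_iff hw3]
  exact mul_left_cancel₀ hw1 (by linear_combination -hS3)

lemma eq_jacobiSym_ordCompl_three {t : ℕ → ℤ} (ht1 : t 1 = 1)
    (htmul : ∀ m n : ℕ, 1 ≤ m → 1 ≤ n → t (m * n) = t m * t n) (ht3 : t 3 = 1)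
    (htp : ∀ p : ℕ, p.Prime → p ≠ 3 → t p = if p % 3 = 2 then -1 else 1) {n : ℕ} (hn : n ≠ 0) :
    t n = jacobiSym (ordCompl[3] n : ℕ) 3 := by
  induction n using Nat.recOnMul with
  | zero => exact absurd rfl hn
  | one => simp [ht1]
  | prime p hp =>
    rcases eq_or_ne p 3 with rfl | hp3
    · simp [ht3, Nat.Prime.factorization_self Nat.prime_three]
    · have hp3' : ¬ 3 ∣ p := fun h =>
        hp3 ((Nat.prime_dvd_prime_iff_eq Nat.prime_three hp).mp h).symm
      rw [htp p hp hp3, Nat.factorization_eq_zero_of_not_dvd hp3', pow_zero, Nat.div_one]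
      have : p % 3 = 1 ∨ p % 3 = 2 := by omega
      rcases this with h | h
      · rw [jacobiSym.mod_left' (a₂ := 1) (by omega)]; simp [h]
      · rw [jacobiSym.mod_left' (a₂ := 2) (by omega)]; norm_num [h]
  | mul a b iha ihb =>
    obtain ⟨ha, hb⟩ := mul_ne_zero_iff.mp hn
    rw [htmul a b (by omega) (by omega), iha ha, ihb hb, Nat.ordCompl_mul, Nat.cast_mul,
      jacobiSym.mul_left]

/-- For `|z| < 1`,
`Σ_{n≥1} t(n) zⁿ = Σ_{k≥0} z^(3^k)/(1 + z^(3^k) + z^(2·3^k))`. -/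
theorem stmt_12 (t : ℕ → ℤ)
    (ht1 : t 1 = 1)
    (htmul : ∀ m n : ℕ, 1 ≤ m → 1 ≤ n → t (m * n) = t m * t n)
    (ht3 : t 3 = 1)
    (htp : ∀ p : ℕ, p.Prime → p ≠ 3 → t p = if p % 3 = 2 then -1 else 1)
    (z : ℂ) (hz : ‖z‖ < 1) :
    (∑' n : ℕ, (t (n + 1) : ℂ) * z ^ (n + 1))
      = ∑' k : ℕ, z ^ (3 ^ k) / (1 + z ^ (3 ^ k) + z ^ (2 * 3 ^ k)) := by
  set f : ℕ → ℂ := fun n => (jacobiSym (ordCompl[3] n : ℕ) 3 : ℂ)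
  have hf0 : f 0 = 0 := by simp [f, jacobiSym.zero_left]
  have hf3 : ∀ n, f (3 * n) = f n := fun n => by
    simpa [f] using congrArg (fun m : ℕ => (jacobiSym m 3 : ℂ))
      (Nat.ordCompl_self_pow_mul n 1 Nat.prime_three)
  have hc : ∀ n : ℕ, (if 3 ∣ n then 0 else f n) = jacobiSym n 3 := fun n => by
    split_ifs with h
    · rw [jacobiSym.mod_left' (a₂ := 0) (by omega), jacobiSym.zero_left (by norm_num)]
      simp
    · simp [f, Nat.factorization_eq_zero_of_not_dvd h]
  calc ∑' n, (t (n + 1) : ℂ) * z ^ (n + 1) = ∑' n, f (n + 1) * z ^ (n + 1) :=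
        tsum_congr fun n => by rw [eq_jacobiSym_ordCompl_three ht1 htmul ht3 htp n.succ_ne_zero]
    _ = ∑' n, f n * z ^ n := tsum_mul_pow_succ hf0
    _ = ∑' k, ∑' n, (if 3 ∣ n then 0 else f n) * (z ^ 3 ^ k) ^ n :=
        (hasSum_tsum_mul_pow_of_apply_mul_eq (by norm_num) hf0
          (fun n => norm_jacobiSym_le_one _ 3) hf3 hz).tsum_eq.symm
    _ = _ := tsum_congr fun k => by
        have hzk : ‖z ^ 3 ^ k‖ < 1 := by
          rw [norm_pow]; exact pow_lt_one₀ (norm_nonneg z) hz (by positivity)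
        simp_rw [hc]
        rw [tsum_jacobiSym_three_mul_pow hzk, mul_comm, pow_mul]
end

section
/- Let p be an odd prime and f : ℕ → {-1,1} a character-like function associated to p (completely multiplicative, f(p) = ±1, and f(kp + i) = f(i) for 1 ≤ i ≤ p-1 and k ≥ 0). Then for |z| < 1 the generating function F(z) = Σ_{n=1}^∞ f(n) z^n satisfies F(z) = f(p)·F(z^p) + Φ(z)/(1 - z^p), where Φ(z) = Σ_{i=1}^{p-1} f(i) z^i. -/
/-!
Split the series `F(z) = ∑ f(n) zⁿ` along the residue of `n` modulo `p`. By periodicity each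
nonzero residue class `i` contributes the geometric series `f(i) zⁱ ∑ₖ (z^p)ᵏ`, while by
multiplicativity the class of multiples of `p` contributes `∑ₖ f(p) f(k) (z^p)ᵏ = f(p) F(z^p)`.
-/

open Finset

theorem Summable.tsum_eq_sum_range_tsum_mul_add {E : Type*} [AddCommGroup E] [UniformSpace E]
    [IsUniformAddGroup E] [CompleteSpace E] [T0Space E] {a : ℕ → E} (ha : Summable a)
    (p : ℕ) [NeZero p] :
    ∑' n, a n = ∑ j ∈ range p, ∑' k, a (k * p + j) := by
  obtain ⟨n, rfl⟩ := Nat.exists_eq_succ_of_ne_zero (NeZero.ne p)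
  rw [Nat.sumByResidueClasses ha (n + 1), sum_range]
  exact sum_congr rfl fun j _ ↦ tsum_congr fun k ↦ by rw [add_comm, mul_comm]; rfl

theorem summable_mul_pow_of_norm_le_one {𝕜 : Type*} [NormedRing 𝕜] [NormOneClass 𝕜]
    [CompleteSpace 𝕜]
    {a : ℕ → 𝕜} (ha : ∀ n, ‖a n‖ ≤ 1) {z : 𝕜} (hz : ‖z‖ < 1) :
    Summable fun n ↦ a n * z ^ n := by
  refine .of_norm_bounded (summable_geometric_of_lt_one (norm_nonneg z) hz) fun n ↦ ?_
  calc ‖a n * z ^ n‖ ≤ ‖a n‖ * ‖z‖ ^ n :=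
        (norm_mul_le _ _).trans (by gcongr; exact norm_pow_le _ _)
    _ ≤ ‖z‖ ^ n := mul_le_of_le_one_left (by positivity) (ha n)

theorem tsum_mul_pow_succ_eq_of_periodic {𝕜 : Type*} [NormedField 𝕜] [CompleteSpace 𝕜]
    {f : ℕ → 𝕜} {p : ℕ} [NeZero p]
    (hper : ∀ k i : ℕ, 1 ≤ i → i ≤ p - 1 → f (k * p + i) = f i)
    (hmul : ∀ k : ℕ, f ((k + 1) * p) = f p * f (k + 1))
    {z : 𝕜} (hz : ‖z‖ < 1) (hsum : Summable fun n ↦ f (n + 1) * z ^ (n + 1)) :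
    ∑' n, f (n + 1) * z ^ (n + 1)
      = f p * ∑' n, f (n + 1) * (z ^ p) ^ (n + 1)
        + (∑ i ∈ Icc 1 (p - 1), f i * z ^ i) / (1 - z ^ p) := by
  have hzp : ‖z ^ p‖ < 1 := by
    rw [norm_pow]; exact pow_lt_one₀ (norm_nonneg z) hz (NeZero.ne p)
  obtain ⟨q, rfl⟩ := Nat.exists_eq_add_one_of_ne_zero (NeZero.ne p)
  rw [Nat.add_sub_cancel] at hper ⊢
  have hlast (k : ℕ) : f (k * (q + 1) + q + 1) * z ^ (k * (q + 1) + q + 1)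
      = f (q + 1) * (f (k + 1) * (z ^ (q + 1)) ^ (k + 1)) := by
    rw [show k * (q + 1) + q + 1 = (k + 1) * (q + 1) by ring, hmul, mul_comm (k + 1), pow_mul]
    ring
  have hrest (j : ℕ) (hj : j ∈ range q) (k : ℕ) :
      f (k * (q + 1) + j + 1) * z ^ (k * (q + 1) + j + 1)
        = f (j + 1) * z ^ (j + 1) * (z ^ (q + 1)) ^ k := by
    rw [add_assoc, hper k (j + 1) (by omega) (by simpa using hj), pow_add, mul_comm k, pow_mul]
    ring
  rw [hsum.tsum_eq_sum_range_tsum_mul_add (q + 1), sum_range_succ, tsum_congr hlast,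
    tsum_mul_left, sum_congr rfl fun j hj ↦ tsum_congr (hrest j hj)]
  simp_rw [tsum_mul_left, tsum_geometric_of_norm_lt_one hzp]
  rw [← Ico_add_one_right_eq_Icc, sum_Ico_eq_sum_range, Nat.add_sub_cancel, div_eq_mul_inv,
    sum_mul, add_comm]
  simp only [add_comm 1]

theorem stmt_14_general (p : ℕ) (hp : p.Prime)
    (f : ℕ → ℤ)
    (hfmul : ∀ m n : ℕ, 1 ≤ m → 1 ≤ n → f (m * n) = f m * f n)
    (hfval : ∀ n : ℕ, 1 ≤ n → f n = 1 ∨ f n = -1)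
    (hfper : ∀ k i : ℕ, 1 ≤ i → i ≤ p - 1 → f (k * p + i) = f i)
    (z : ℂ) (hz : ‖z‖ < 1) :
    (∑' n : ℕ, (f (n + 1) : ℂ) * z ^ (n + 1))
      = (f p : ℂ) * (∑' n : ℕ, (f (n + 1) : ℂ) * (z ^ p) ^ (n + 1))
        + (∑ i ∈ Finset.Icc 1 (p - 1), (f i : ℂ) * z ^ i) / (1 - z ^ p) := by
  have : NeZero p := ⟨hp.ne_zero⟩
  have hnorm (n : ℕ) : ‖(f (n + 1) : ℂ)‖ ≤ 1 := by
    rcases hfval (n + 1) n.succ_pos with h | h <;> simp [h]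
  have hsum : Summable fun n ↦ (f (n + 1) : ℂ) * z ^ (n + 1) := by
    simpa only [pow_succ, mul_left_comm z, mul_assoc, mul_comm z]
      using (summable_mul_pow_of_norm_le_one hnorm hz).mul_left z
  refine tsum_mul_pow_succ_eq_of_periodic (f := fun n ↦ (f n : ℂ)) (fun k i hi hi' ↦ ?_)
    (fun k ↦ ?_) hz hsum
  · exact_mod_cast hfper k i hi hi'
  · exact_mod_cast (hfmul (k + 1) p k.succ_pos hp.pos).trans (mul_comm _ _)

/-- For a character-like function `f` associated to an odd prime
`p`, for `|z| < 1`: `F(z) = f(p)·F(z^p) + Φ(z)/(1 - z^p)` where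
`Φ(z) = Σ_{i=1}^{p-1} f(i) zⁱ`. -/
theorem stmt_14 (p : ℕ) (hp : p.Prime) (hpodd : Odd p)
    (f : ℕ → ℤ)
    (hf1 : f 1 = 1)
    (hfmul : ∀ m n : ℕ, 1 ≤ m → 1 ≤ n → f (m * n) = f m * f n)
    (hfval : ∀ n : ℕ, 1 ≤ n → f n = 1 ∨ f n = -1)
    (hfper : ∀ k i : ℕ, 1 ≤ i → i ≤ p - 1 → f (k * p + i) = f i)
    (z : ℂ) (hz : ‖z‖ < 1) :
    (∑' n : ℕ, (f (n + 1) : ℂ) * z ^ (n + 1))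
      = (f p : ℂ) * (∑' n : ℕ, (f (n + 1) : ℂ) * (z ^ p) ^ (n + 1))
        + (∑ i ∈ Finset.Icc 1 (p - 1), (f i : ℂ) * z ^ i) / (1 - z ^ p) :=
  stmt_14_general p hp f hfmul hfval hfper z hz
end

section
/- Let p be an odd prime and f a character-like function associated to p, with F and Φ as below. Then for |z| < 1, F(z) = Σ_{k=0}^∞ f(p)^k · Φ(z^(p^k)) / (1 - z^(p^(k+1))). -/
/-!
Iterating the functional equation `F(w) = f(p) F(wᵖ) + Φ(w) / (1 - wᵖ)` telescopes: after `k` steps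
the remainder is `f(p)ᵏ F(z^(pᵏ))`, which is `O(|z|ᵏ)` since `|F(w)| ≤ |w| / (1 - |z|)` for
`|w| ≤ |z|`, so the partial sums converge absolutely to `F(z)`.
-/

open Finset

section Telescoping

variable {𝕜 E : Type*} [NormedField 𝕜] [NormedAddCommGroup E] [NormedSpace 𝕜 E] [CompleteSpace E]

theorem hasSum_sub_succ_of_norm_le_geometric {a : ℕ → E} {C r : ℝ} (hr₀ : 0 ≤ r) (hr : r < 1)
    (ha : ∀ k, ‖a k‖ ≤ C * r ^ k) : HasSum (fun k => a k - a (k + 1)) (a 0) := by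
  obtain ⟨s, hs⟩ : Summable a :=
    .of_norm_bounded ((summable_geometric_of_lt_one hr₀ hr).mul_left C) ha
  have hs_succ : HasSum (fun k => a (k + 1)) (s - a 0) := by
    simpa using (hasSum_nat_add_iff' 1).mpr hs
  simpa using hs.sub hs_succ

theorem hasSum_pow_smul_comp_pow_pow {F G : 𝕜 → E} {c z : 𝕜} {p : ℕ} {C : ℝ} (hp : 1 < p)
    (hc : ‖c‖ ≤ 1) (hz : ‖z‖ < 1) (hC : 0 ≤ C)
    (hFG : ∀ w, ‖w‖ ≤ ‖z‖ → F w = c • F (w ^ p) + G w)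
    (hF : ∀ w, ‖w‖ ≤ ‖z‖ → ‖F w‖ ≤ C * ‖w‖) :
    HasSum (fun k => c ^ k • G (z ^ p ^ k)) (F z) := by
  have hz_pow_le : ∀ k, ‖z ^ p ^ k‖ ≤ ‖z‖ := fun k => by
    rw [norm_pow]
    exact pow_le_of_le_one (norm_nonneg z) hz.le (pow_ne_zero k (by omega))
  have hz_pow_le_geom : ∀ k, ‖z ^ p ^ k‖ ≤ ‖z‖ ^ k := fun k => by
    rw [norm_pow]
    exact pow_le_pow_of_le_one (norm_nonneg z) hz.le (Nat.lt_pow_self hp).le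
  have h_decay : ∀ k, ‖c ^ k • F (z ^ p ^ k)‖ ≤ C * ‖z‖ ^ k := fun k =>
    calc ‖c ^ k • F (z ^ p ^ k)‖ = ‖c‖ ^ k * ‖F (z ^ p ^ k)‖ := by rw [norm_smul, norm_pow]
      _ ≤ 1 * (C * ‖z ^ p ^ k‖) :=
        mul_le_mul (pow_le_one₀ (norm_nonneg c) hc) (hF _ (hz_pow_le k)) (norm_nonneg _) zero_le_one
      _ ≤ C * ‖z‖ ^ k := by rw [one_mul]; exact mul_le_mul_of_nonneg_left (hz_pow_le_geom k) hC
  have h_tele := hasSum_sub_succ_of_norm_le_geometric (norm_nonneg z) hz h_decay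
  convert h_tele using 1
  · funext k
    rw [hFG _ (hz_pow_le k), ← pow_mul, ← pow_succ, pow_succ c, mul_smul, smul_add]
    abel
  · simp

end Telescoping

namespace CharacterLike

variable {f : ℕ → ℤ} {p : ℕ} {w : ℂ}

noncomputable def genFun (f : ℕ → ℤ) (w : ℂ) : ℂ :=
  ∑' n : ℕ, (f (n + 1) : ℂ) * w ^ (n + 1)

def periodPoly (f : ℕ → ℤ) (p : ℕ) (w : ℂ) : ℂ :=
  ∑ i ∈ Icc 1 (p - 1), (f i : ℂ) * w ^ i

theorem norm_genFun_term_le (hf : ∀ n, |f (n + 1)| ≤ 1) (w : ℂ) (n : ℕ) :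
    ‖(f (n + 1) : ℂ) * w ^ (n + 1)‖ ≤ ‖w‖ ^ (n + 1) := by
  rw [norm_mul, norm_pow, Complex.norm_intCast]
  exact mul_le_of_le_one_left (by positivity) (by exact_mod_cast hf n)

theorem hasSum_genFun (hf : ∀ n, |f (n + 1)| ≤ 1) (hw : ‖w‖ < 1) :
    HasSum (fun n => (f (n + 1) : ℂ) * w ^ (n + 1)) (genFun f w) :=
  (Summable.of_norm_bounded ((summable_nat_add_iff 1).mpr
    (summable_geometric_of_lt_one (norm_nonneg w) hw)) (norm_genFun_term_le hf w)).hasSum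

theorem norm_genFun_le (hf : ∀ n, |f (n + 1)| ≤ 1) {r : ℝ} (hr : r < 1) (hw : ‖w‖ ≤ r) :
    ‖genFun f w‖ ≤ (1 - r)⁻¹ * ‖w‖ := by
  have hw₁ : ‖w‖ < 1 := hw.trans_lt hr
  have h_geom : HasSum (fun n => ‖w‖ ^ (n + 1)) (‖w‖ * (1 - ‖w‖)⁻¹) := by
    simpa [pow_succ'] using (hasSum_geometric_of_lt_one (norm_nonneg w) hw₁).mul_left ‖w‖
  calc ‖genFun f w‖ ≤ ‖w‖ * (1 - ‖w‖)⁻¹ := tsum_of_norm_bounded h_geom (norm_genFun_term_le hf w)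
    _ ≤ ‖w‖ * (1 - r)⁻¹ := by gcongr
    _ = (1 - r)⁻¹ * ‖w‖ := mul_comm _ _

/-- Block `q` of the series consists of the terms with exponent in `(qp, qp + p]`: the last one is a
term of `f(p) F(wᵖ)`, the others add up to `(wᵖ)^q Φ(w)` by periodicity. -/
theorem sum_range_block_eq (hp : 0 < p) (hfp : ∀ m, f ((m + 1) * p) = f (m + 1) * f p)
    (hfper : ∀ k i, 1 ≤ i → i ≤ p - 1 → f (k * p + i) = f i) (w : ℂ) (q : ℕ) :
    ∑ r ∈ range p, (f (q * p + r + 1) : ℂ) * w ^ (q * p + r + 1)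
      = f p * ((f (q + 1) : ℂ) * (w ^ p) ^ (q + 1)) + (w ^ p) ^ q * periodPoly f p w := by
  obtain ⟨p, rfl⟩ : ∃ p', p = p' + 1 := ⟨p - 1, by omega⟩
  have h_last : q * (p + 1) + p + 1 = (q + 1) * (p + 1) := by ring
  have h_poly : periodPoly f (p + 1) w = ∑ r ∈ range p, (f (r + 1) : ℂ) * w ^ (r + 1) := by
    rw [periodPoly, Nat.add_sub_cancel, ← Ico_add_one_right_eq_Icc, sum_Ico_eq_sum_range,
      Nat.add_sub_cancel]
    simp only [add_comm 1]
  rw [sum_range_succ, h_last, hfp, h_poly, mul_sum, add_comm]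
  congr 1
  · push_cast; ring
  · refine sum_congr rfl fun r hr => ?_
    rw [add_assoc, hfper q (r + 1) (by omega) (by simp at hr; omega), pow_add, pow_mul]
    ring

theorem genFun_eq (hp : 0 < p) (hf : ∀ n, |f (n + 1)| ≤ 1)
    (hfp : ∀ m, f ((m + 1) * p) = f (m + 1) * f p)
    (hfper : ∀ k i, 1 ≤ i → i ≤ p - 1 → f (k * p + i) = f i) (hw : ‖w‖ < 1) :
    genFun f w = f p * genFun f (w ^ p) + periodPoly f p w / (1 - w ^ p) := by
  have : NeZero p := ⟨hp.ne'⟩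
  have hwp : ‖w ^ p‖ < 1 := by
    rw [norm_pow]; exact pow_lt_one₀ (norm_nonneg w) hw hp.ne'
  set a : ℕ → ℂ := fun n => (f (n + 1) : ℂ) * w ^ (n + 1)
  have h_blocks : HasSum (fun x : ℕ × Fin p => a (x.1 * p + x.2)) (genFun f w) := by
    have h := (Nat.divModEquiv p).symm.hasSum_iff.mpr (hasSum_genFun hf hw)
    exact h
  have h_block : ∀ q, ∑ r : Fin p, a (q * p + r)
      = f p * ((f (q + 1) : ℂ) * (w ^ p) ^ (q + 1)) + (w ^ p) ^ q * periodPoly f p w := fun q => by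
    rw [Fin.sum_univ_eq_sum_range (fun r => a (q * p + r)) p]
    exact sum_range_block_eq hp hfp hfper w q
  have h_fiber := h_blocks.prod_fiberwise fun q => hasSum_fintype _
  simp only [h_block] at h_fiber
  refine h_fiber.unique ?_
  rw [div_eq_inv_mul]
  exact ((hasSum_genFun hf hwp).mul_left _).add
    ((hasSum_geometric_of_norm_lt_one hwp).mul_right _)

end CharacterLike

theorem stmt_15_general (p : ℕ) (hp : p.Prime)
    (f : ℕ → ℤ)
    (hfmul : ∀ m n : ℕ, 1 ≤ m → 1 ≤ n → f (m * n) = f m * f n)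
    (hfval : ∀ n : ℕ, 1 ≤ n → f n = 1 ∨ f n = -1)
    (hfper : ∀ k i : ℕ, 1 ≤ i → i ≤ p - 1 → f (k * p + i) = f i)
    (z : ℂ) (hz : ‖z‖ < 1) :
    (∑' n : ℕ, (f (n + 1) : ℂ) * z ^ (n + 1))
      = ∑' k : ℕ, ((f p : ℂ)) ^ k *
          (∑ i ∈ Finset.Icc 1 (p - 1), (f i : ℂ) * (z ^ (p ^ k)) ^ i)
            / (1 - z ^ (p ^ (k + 1))) := by
  have hf : ∀ n, |f (n + 1)| ≤ 1 := fun n => by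
    rcases hfval (n + 1) (by omega) with h | h <;> simp [h]
  have hfp : ∀ m, f ((m + 1) * p) = f (m + 1) * f p := fun m =>
    hfmul _ _ (by omega) hp.one_le
  have hnorm_fp : ‖(f p : ℂ)‖ ≤ 1 := by
    rcases hfval p hp.one_le with h | h <;> simp [h]
  have h_series := hasSum_pow_smul_comp_pow_pow (F := CharacterLike.genFun f)
    (G := fun w => CharacterLike.periodPoly f p w / (1 - w ^ p)) hp.one_lt hnorm_fp hz
    (inv_nonneg.mpr (sub_nonneg.mpr hz.le))
    (fun w hw => CharacterLike.genFun_eq hp.pos hf hfp hfper (hw.trans_lt hz))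
    (fun w hw => CharacterLike.norm_genFun_le hf hz hw)
  refine h_series.tsum_eq.symm.trans (tsum_congr fun k => ?_)
  rw [smul_eq_mul, mul_div_assoc, ← pow_mul, ← pow_succ]
  rfl

/-- For a character-like function `f` associated to an odd prime
`p`, for `|z| < 1`: `F(z) = Σ_{k≥0} f(p)^k · Φ(z^(p^k)) / (1 - z^(p^(k+1)))`. -/
theorem stmt_15 (p : ℕ) (hp : p.Prime) (hpodd : Odd p)
    (f : ℕ → ℤ)
    (hf1 : f 1 = 1)
    (hfmul : ∀ m n : ℕ, 1 ≤ m → 1 ≤ n → f (m * n) = f m * f n)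
    (hfval : ∀ n : ℕ, 1 ≤ n → f n = 1 ∨ f n = -1)
    (hfper : ∀ k i : ℕ, 1 ≤ i → i ≤ p - 1 → f (k * p + i) = f i)
    (z : ℂ) (hz : ‖z‖ < 1) :
    (∑' n : ℕ, (f (n + 1) : ℂ) * z ^ (n + 1))
      = ∑' k : ℕ, ((f p : ℂ)) ^ k *
          (∑ i ∈ Finset.Icc 1 (p - 1), (f i : ℂ) * (z ^ (p ^ k)) ^ i)
            / (1 - z ^ (p ^ (k + 1))) :=
  stmt_15_general p hp f hfmul hfval hfper z hz
end
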